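/- arXiv:2012.10287 — 5 statements merged into one kernel-verified Lean document; each statement's English description precedes it below -/
import Mathlib

section
/- Let H be a real Hilbert space, H² = H × H with the inner product ⟨(x₁,y₁),(x₂,y₂)⟩₂ = ⟨x₁,x₂⟩ + ⟨y₁,y₂⟩, and J : H² → H² the operator J(x,y) = (-y,x). Let A₀ be a closed, densely defined, symmetric linear operator in H (i.e. A₀ ⊆ A₀*) of finite defect m, i.e. the orthogonal complement of graph(A₀) inside graph(A₀*) has dimension 2m. Set M = graph(A₀*) (a closed subspace of H²), let Θ : M → ℝ^m be a bounded linear operator and Θ* : ℝ^m → M its Hilbert-space adjoint, and set C = M ∩ J(M). Then the subspace L = ker(Θ) is the graph of a self-adjoint extension A of A₀ (i.e. there is a densely defined operator A with A₀ ⊆ A, A = A*, graph(A) = L) if and only if the following three conditions hold: (1) Im(Θ) = ℝ^m; (2) Im(Θ*) ⊆ C; (3) Θ J Θ* = 0. -/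
/-- The operator `J(x,y) = (-y, x)` on `H² = H ×₂ H`. -/
noncomputable def symplJ (H : Type*) [NormedAddCommGroup H] [InnerProductSpace ℝ H] :
    WithLp 2 (H × H) →ₗ[ℝ] WithLp 2 (H × H) :=
  (WithLp.linearEquiv 2 ℝ (H × H)).symm.toLinearMap ∘ₗ
    (LinearMap.prod (-(LinearMap.snd ℝ H H)) (LinearMap.fst ℝ H H)) ∘ₗ
    (WithLp.linearEquiv 2 ℝ (H × H)).toLinearMap

/-- The graph of a partially defined operator `A` in `H`, as a subspace of `H² = H ×₂ H`
(with the inner product `⟪(x₁,y₁),(x₂,y₂)⟫₂ = ⟪x₁,x₂⟫ + ⟪y₁,y₂⟫`). -/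
noncomputable def graphL2 {H : Type*} [NormedAddCommGroup H] [InnerProductSpace ℝ H]
    (A : H →ₗ.[ℝ] H) : Submodule ℝ (WithLp 2 (H × H)) :=
  A.graph.comap (WithLp.linearEquiv 2 ℝ (H × H)).toLinearMap

section auxiliary

variable {H : Type*} [NormedAddCommGroup H] [InnerProductSpace ℝ H]


@[simp] lemma symplJ_fst (p : WithLp 2 (H × H)) : (symplJ H p).fst = -p.snd := rfl
@[simp] lemma symplJ_snd (p : WithLp 2 (H × H)) : (symplJ H p).snd = p.fst := rfl

lemma symplJ_symplJ (p : WithLp 2 (H × H)) : symplJ H (symplJ H p) = -p := by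
  apply WithLp.ofLp_injective 2
  apply Prod.ext <;> simp [symplJ]

local notation "⟪" x ", " y "⟫" => @inner ℝ _ _ x y

lemma inner_symplJ_symplJ (p q : WithLp 2 (H × H)) : ⟪symplJ H p, symplJ H q⟫ = ⟪p, q⟫ := by
  simp [WithLp.prod_inner_apply, add_comm]

lemma inner_symplJ_left (p q : WithLp 2 (H × H)) : ⟪symplJ H p, q⟫ = -⟪p, symplJ H q⟫ := by
  simp only [WithLp.prod_inner_apply, WithLp.ofLp_fst, WithLp.ofLp_snd, symplJ_fst, symplJ_snd, inner_neg_left, inner_neg_right]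
  ring

open Submodule

lemma map_symplJ_map_symplJ (K : Submodule ℝ (WithLp 2 (H × H))) :
    (K.map (symplJ H)).map (symplJ H) = K := by
  ext x
  simp only [Submodule.mem_map]
  constructor
  · rintro ⟨y, ⟨z, hz, rfl⟩, rfl⟩
    rw [symplJ_symplJ]; exact K.neg_mem hz
  · intro hx
    exact ⟨symplJ H (-x), ⟨-x, K.neg_mem hx, rfl⟩, by rw [symplJ_symplJ, neg_neg]⟩

lemma map_symplJ_orthogonal (K : Submodule ℝ (WithLp 2 (H × H))) :
    (Kᗮ).map (symplJ H) = (K.map (symplJ H))ᗮ := by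
  ext x
  simp only [Submodule.mem_map, Submodule.mem_orthogonal]
  constructor
  · rintro ⟨y, hy, rfl⟩ u ⟨k, hk, rfl⟩
    rw [inner_symplJ_symplJ]
    exact hy k hk
  · intro hx
    refine ⟨-(symplJ H x), fun k hk => ?_, by rw [map_neg, symplJ_symplJ, neg_neg]⟩
    rw [inner_neg_right, ← inner_symplJ_left]
    exact hx _ ⟨k, hk, rfl⟩

lemma mem_graphL2 {A : H →ₗ.[ℝ] H} {p : WithLp 2 (H × H)} :
    p ∈ graphL2 A ↔ (p.fst, p.snd) ∈ A.graph := Iff.rfl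

theorem graphL2_adjoint [CompleteSpace H] {A : H →ₗ.[ℝ] H} (hA : Dense (A.domain : Set H)) :
    graphL2 A.adjoint = ((graphL2 A).map (symplJ H))ᗮ := by
  ext p
  rw [Submodule.mem_orthogonal, mem_graphL2, LinearPMap.mem_graph_iff]
  constructor
  · rintro ⟨y, hy1, hy2⟩ u ⟨q, hq, rfl⟩
    rw [SetLike.mem_coe] at hq
    obtain ⟨x, hx1, hx2⟩ := mem_graphL2.mp hq |> (LinearPMap.mem_graph_iff A).mp
    have hy1' : (y : H) = p.fst := hy1
    have hy2' : A.adjoint y = p.snd := hy2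
    rw [WithLp.prod_inner_apply]
    simp only [WithLp.ofLp_fst, WithLp.ofLp_snd, symplJ_fst, symplJ_snd, inner_neg_left]
    rw [← show (x : H) = q.fst from hx1, ← show A x = q.snd from hx2, ← hy1', ← hy2']
    have h := LinearPMap.adjoint_isFormalAdjoint hA y x
    have c1 := real_inner_comm ((x : H)) (A.adjoint y)
    have c2 := real_inner_comm ((A x : H)) ((y : H))
    linarith
  · intro hp
    have key : ∀ x : A.domain, ⟪p.snd, (x : H)⟫ = ⟪p.fst, A x⟫ := by
      intro x
      have hq : ((WithLp.linearEquiv 2 ℝ (H × H)).symm ((x : H), A x)) ∈ graphL2 A := by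
        rw [mem_graphL2]
        exact A.mem_graph x
      have := hp _ ⟨_, hq, rfl⟩
      rw [WithLp.prod_inner_apply] at this
      simp only [WithLp.ofLp_fst, WithLp.ofLp_snd, symplJ_fst, symplJ_snd, inner_neg_left] at this
      have h2 : (((WithLp.linearEquiv 2 ℝ (H × H)).symm ((x : H), A x)).fst : H) = (x : H) := rfl
      have h3 : (((WithLp.linearEquiv 2 ℝ (H × H)).symm ((x : H), A x)).snd : H) = A x := rfl
      rw [h2, h3] at this
      have c1 := real_inner_comm p.snd ((x : H))
      have c2 := real_inner_comm p.fst ((A x : H))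
      linarith
    have hdom : p.fst ∈ A.adjoint.domain :=
      LinearPMap.mem_adjoint_domain_of_exists _ ⟨p.snd, fun x => key x⟩
    refine ⟨⟨p.fst, hdom⟩, rfl, ?_⟩
    exact LinearPMap.adjoint_apply_eq hA ⟨p.fst, hdom⟩ (fun x => key x)

section helpers

variable {F : Type*} [NormedAddCommGroup F] [InnerProductSpace ℝ F]

lemma le_orth_symm {X Y : Submodule ℝ F} (h : X ≤ Yᗮ) : Y ≤ Xᗮ := fun y hy =>
  (Submodule.mem_orthogonal _ _).mpr fun x hx => by
    have := (Submodule.mem_orthogonal _ _).mp (h hx) y hy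
    rwa [real_inner_comm] at this

lemma sup_cancel_le {G X Y : Submodule ℝ F} (hX : X ≤ Gᗮ) (hY : Y ≤ Gᗮ)
    (h : G ⊔ X ≤ G ⊔ Y) : X ≤ Y := by
  intro x hx
  obtain ⟨g, hg, y, hy, hxy⟩ := Submodule.mem_sup.mp (h (Submodule.mem_sup_right hx))
  have hgx : (inner ℝ g x : ℝ) = 0 := (Submodule.mem_orthogonal _ _).mp (hX hx) g hg
  have hgy : (inner ℝ g y : ℝ) = 0 := (Submodule.mem_orthogonal _ _).mp (hY hy) g hg
  have hgeq : g = x - y := by rw [← hxy]; abel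
  have hg0 : g = 0 := by
    rw [← inner_self_eq_zero (𝕜 := ℝ)]
    nth_rewrite 2 [hgeq]
    rw [inner_sub_right, hgx, hgy, sub_zero]
  rw [hg0, zero_add] at hxy
  rwa [← hxy]

lemma finrank_add_finrank_orth_inf {R D : Submodule ℝ F} [FiniteDimensional ℝ D]
    (h : R ≤ D) : Module.finrank ℝ R + Module.finrank ℝ ↥(Rᗮ ⊓ D) = Module.finrank ℝ D := by
  haveI : FiniteDimensional ℝ R := Submodule.finiteDimensional_of_le h
  haveI : FiniteDimensional ℝ ↥(Rᗮ ⊓ D) := Submodule.finiteDimensional_of_le inf_le_right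
  haveI : CompleteSpace R := FiniteDimensional.complete ℝ R
  have hsup := Submodule.sup_orthogonal_inf_of_hasOrthogonalProjection h
  have hinf : R ⊓ (Rᗮ ⊓ D) = ⊥ := by
    rw [eq_bot_iff, ← Submodule.inf_orthogonal_eq_bot R]
    exact inf_le_inf_left R inf_le_left
  have hh := Submodule.finrank_sup_add_finrank_inf_eq R (Rᗮ ⊓ D)
  rw [hsup, hinf, finrank_bot, add_zero] at hh
  omega

end helpers


lemma map_comap_linearEquiv {R M N : Type*} [CommRing R] [AddCommGroup M] [AddCommGroup N]
    [Module R M] [Module R N] (e : M ≃ₗ[R] N) (K : Submodule R N) :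
    Submodule.map (e.toLinearMap) (Submodule.comap (e.toLinearMap) K) = K := by
  rw [Submodule.map_comap_eq, LinearEquiv.range, top_inf_eq]

end auxiliary

set_option maxHeartbeats 1000000 in
set_option synthInstance.maxHeartbeats 1000000 in
/-- Lemma 3.6: Let `A₀` be a closed densely defined symmetric operator in a real
Hilbert space `H`, of finite defect `m` (i.e. the orthogonal complement of `graph A₀` inside
`M = graph A₀*` has dimension `2m`).  Let `Θ : M → ℝ^m` be a bounded linear operator, `Θ*` its
Hilbert-space adjoint and `C = M ∩ J(M)`.  Then `L = ker Θ` is the graph of a self-adjoint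
extension `A` of `A₀` iff `Im Θ = ℝ^m`, `Im Θ* ⊆ C` and `Θ J Θ* = 0`. -/
theorem statement0 {H : Type*} [NormedAddCommGroup H] [InnerProductSpace ℝ H] [CompleteSpace H]
    (A₀ : H →ₗ.[ℝ] H) (hdense : Dense (A₀.domain : Set H))
    (hclosed : IsClosed ((graphL2 A₀ : Submodule ℝ (WithLp 2 (H × H))) : Set (WithLp 2 (H × H))))
    (hsymm : A₀ ≤ A₀.adjoint) (m : ℕ)
    (hfin : FiniteDimensional ℝ ↥((graphL2 A₀)ᗮ ⊓ graphL2 A₀.adjoint))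
    (hdefect : Module.finrank ℝ ↥((graphL2 A₀)ᗮ ⊓ graphL2 A₀.adjoint) = 2 * m)
    (M : Submodule ℝ (WithLp 2 (H × H))) (hM : M = graphL2 A₀.adjoint)
    (hMclosed : IsClosed (M : Set (WithLp 2 (H × H)))) [CompleteSpace ↥M]
    (Θ : ↥M →L[ℝ] EuclideanSpace ℝ (Fin m))
    (C : Submodule ℝ (WithLp 2 (H × H))) (hC : C = M ⊓ M.map (symplJ H)) :
    (∃ A : H →ₗ.[ℝ] H, Dense (A.domain : Set H) ∧ A₀ ≤ A ∧ A.adjoint = A ∧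
        graphL2 A = (LinearMap.ker (Θ : ↥M →ₗ[ℝ] EuclideanSpace ℝ (Fin m))).map M.subtype) ↔
      (LinearMap.range (Θ : ↥M →ₗ[ℝ] EuclideanSpace ℝ (Fin m)) = ⊤ ∧
        (∀ c : EuclideanSpace ℝ (Fin m),
          ((ContinuousLinearMap.adjoint Θ c : ↥M) : WithLp 2 (H × H)) ∈ C) ∧
        (∀ (c : EuclideanSpace ℝ (Fin m))
          (h : symplJ H ((ContinuousLinearMap.adjoint Θ c : ↥M) : WithLp 2 (H × H)) ∈ M),
          Θ ⟨symplJ H ((ContinuousLinearMap.adjoint Θ c : ↥M) : WithLp 2 (H × H)), h⟩ = 0)) := by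
  classical
  have hJinj : Function.Injective (symplJ H) := by
    intro a b hab
    have h2 := congrArg (symplJ H) hab
    rw [symplJ_symplJ, symplJ_symplJ] at h2
    exact neg_injective h2
  rw [← hM] at hfin hdefect
  set G := graphL2 A₀ with hGdef
  haveI : CompleteSpace G := hclosed.completeSpace_coe
  have hMG : M = (G.map (symplJ H))ᗮ := by rw [hM, hGdef, graphL2_adjoint hdense]
  have hJM : M.map (symplJ H) = Gᗮ := by
    rw [hMG, ← map_symplJ_orthogonal, map_symplJ_map_symplJ]
  have hGJM : G = (M.map (symplJ H))ᗮ := by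
    rw [hJM, Submodule.orthogonal_orthogonal G]
  have hJG : G.map (symplJ H) = Mᗮ := by
    rw [hGJM, ← map_symplJ_orthogonal, map_symplJ_map_symplJ]
  set D := Gᗮ ⊓ M with hDdef
  haveI hfinD : FiniteDimensional ℝ D := hfin
  have hCD : C = D := by rw [hC, hJM, inf_comm]
  have hGM : G ≤ M := by
    rw [hM, hGdef]; exact Submodule.comap_mono (LinearPMap.le_graph_of_le hsymm)
  have hsupGD : G ⊔ D = M := Submodule.sup_orthogonal_inf_of_hasOrthogonalProjection hGM
  have hDGo : D ≤ Gᗮ := inf_le_left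
  have hDM : D ≤ M := inf_le_right
  have hJD : D.map (symplJ H) = D := by
    rw [hDdef, Submodule.map_inf _ hJinj, map_symplJ_orthogonal, hJG, hJM,
      Submodule.orthogonal_orthogonal, inf_comm]
  set Tad := ContinuousLinearMap.adjoint Θ with hTaddef
  set R := (LinearMap.range (Tad : EuclideanSpace ℝ (Fin m) →ₗ[ℝ] ↥M)).map M.subtype with hRdef
  haveI hfinR : FiniteDimensional ℝ R := by infer_instance
  have hRM : R ≤ M := Submodule.map_subtype_le _ _
  have hmemR : ∀ x : WithLp 2 (H × H),
      x ∈ Rᗮ ↔ ∀ c, (inner ℝ ((Tad c : M) : WithLp 2 (H × H)) x : ℝ) = 0 := by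
    intro x
    rw [Submodule.mem_orthogonal]
    constructor
    · intro h c; exact h _ ⟨Tad c, ⟨c, rfl⟩, rfl⟩
    · rintro h u ⟨u', ⟨c, rfl⟩, rfl⟩; exact h c
  have hLR : (LinearMap.ker (Θ : ↥M →ₗ[ℝ] EuclideanSpace ℝ (Fin m))).map M.subtype = M ⊓ Rᗮ := by
    ext x
    simp only [Submodule.mem_map, LinearMap.mem_ker, Submodule.mem_inf]
    constructor
    · rintro ⟨y, hy, rfl⟩
      refine ⟨y.2, (hmemR _).mpr fun c => ?_⟩
      simp only [Submodule.subtype_apply]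
      rw [← Submodule.coe_inner, hTaddef, ContinuousLinearMap.adjoint_inner_left, (show Θ y = 0 from hy),
        inner_zero_right]
    · rintro ⟨hxM, hxR⟩
      refine ⟨⟨x, hxM⟩, ?_, rfl⟩
      have h5 := (hmemR x).mp hxR (Θ ⟨x, hxM⟩)
      rw [← Submodule.coe_inner (x := Tad (Θ ⟨x, hxM⟩)) (y := ⟨x, hxM⟩), hTaddef,
        ContinuousLinearMap.adjoint_inner_left] at h5
      exact inner_self_eq_zero.mp h5
  have hkerTad : LinearMap.ker (Tad : EuclideanSpace ℝ (Fin m) →ₗ[ℝ] ↥M) = (LinearMap.range (Θ : ↥M →ₗ[ℝ] EuclideanSpace ℝ (Fin m)))ᗮ := by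
    ext c
    simp only [LinearMap.mem_ker, Submodule.mem_orthogonal]
    constructor
    · rintro h u ⟨v, rfl⟩
      rw [ContinuousLinearMap.coe_coe, ← ContinuousLinearMap.adjoint_inner_right Θ, ← hTaddef, (show Tad c = 0 from h), inner_zero_right]
    · intro h
      rw [← inner_self_eq_zero (𝕜 := ℝ), hTaddef, ContinuousLinearMap.coe_coe, ContinuousLinearMap.adjoint_inner_left,
        real_inner_comm]
      exact h _ ⟨Tad c, rfl⟩
  have hfinrankR : Module.finrank ℝ R = Module.finrank ℝ (LinearMap.range (Tad : EuclideanSpace ℝ (Fin m) →ₗ[ℝ] ↥M)) :=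
    Submodule.finrank_map_subtype_eq M _
  have hcond2 : (∀ c, ((Tad c : M) : WithLp 2 (H × H)) ∈ C) ↔ R ≤ C := by
    constructor
    · rintro h x ⟨y, ⟨c, rfl⟩, rfl⟩; exact h c
    · intro h c; exact h ⟨Tad c, ⟨c, rfl⟩, rfl⟩
  -- bridge: existence of A is equivalent to the subspace conditions
  have hbridge : (∃ A : H →ₗ.[ℝ] H, Dense (A.domain : Set H) ∧ A₀ ≤ A ∧ A.adjoint = A ∧
        graphL2 A = (LinearMap.ker (Θ : ↥M →ₗ[ℝ] EuclideanSpace ℝ (Fin m))).map M.subtype) ↔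
      (G ≤ M ⊓ Rᗮ ∧ M ⊓ Rᗮ = (((M ⊓ Rᗮ).map (symplJ H)))ᗮ) := by
    rw [← hLR]
    constructor
    · rintro ⟨A, hAd, hA0A, hAsa, hAg⟩
      rw [← hAg]
      constructor
      · exact Submodule.comap_mono (LinearPMap.le_graph_of_le hA0A)
      · conv_lhs => rw [← hAsa]
        rw [graphL2_adjoint hAd]
    · rintro ⟨hGL, hLag⟩
      set e := (WithLp.linearEquiv 2 ℝ (H × H)) with hedef
      set L := (LinearMap.ker (Θ : ↥M →ₗ[ℝ] EuclideanSpace ℝ (Fin m))).map M.subtype with hLdef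
      have hLM : L ≤ M := Submodule.map_subtype_le _ _
      set g : Submodule ℝ (H × H) := L.map e.toLinearMap with hgdef
      have hg : ∀ x : H × H, x ∈ g → x.fst = 0 → x.snd = 0 := by
        rintro x ⟨p, hp, rfl⟩ h0
        have hpM : p ∈ graphL2 A₀.adjoint := by rw [← hM]; exact hLM hp
        exact A₀.adjoint.graph_fst_eq_zero_snd (mem_graphL2.mp hpM) h0
      set A := g.toLinearPMap with hAdef
      have hAgr : A.graph = g := Submodule.toLinearPMap_graph_eq g hg
      have hgle : graphL2 A = L := by
        rw [graphL2, hAgr, hgdef]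
        ext p
        simp only [Submodule.mem_comap, Submodule.mem_map, LinearEquiv.coe_coe]
        constructor
        · rintro ⟨q, hq, hqe⟩; rwa [← e.injective hqe]
        · intro hp; exact ⟨p, hp, rfl⟩
      have hdd : Dense (A.domain : Set H) := by
        have horth : (A.domain)ᗮ = ⊥ := by
          rw [Submodule.eq_bot_iff]
          intro y hy
          have hp : (e.symm (0, y) : WithLp 2 (H × H)) ∈ (L.map (symplJ H))ᗮ := by
            rw [Submodule.mem_orthogonal]
            rintro u ⟨q, hq, rfl⟩
            have hq1 : q.fst ∈ A.domain := by
              rw [← hgle] at hq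
              obtain ⟨z, hz1, hz2⟩ := (LinearPMap.mem_graph_iff _).mp (mem_graphL2.mp hq)
              rw [← show (z : H) = q.fst from hz1]; exact z.2
            have hy1 : (inner ℝ q.fst y : ℝ) = 0 := (Submodule.mem_orthogonal _ _).mp hy q.fst hq1
            rw [WithLp.prod_inner_apply]
            simp only [WithLp.ofLp_fst, WithLp.ofLp_snd, symplJ_fst, symplJ_snd]
            have c0 : (e.symm (0, y) : WithLp 2 (H × H)).fst = 0 := rfl
            have c1 : (e.symm (0, y) : WithLp 2 (H × H)).snd = y := rfl
            rw [c0, c1, inner_zero_right, hy1, add_zero]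
          rw [← hLag] at hp
          have hpM : (e.symm (0, y) : WithLp 2 (H × H)) ∈ graphL2 A₀.adjoint := by
            rw [← hM]; exact hLM hp
          exact A₀.adjoint.graph_fst_eq_zero_snd (mem_graphL2.mp hpM) rfl
        rw [dense_iff_closure_eq, ← Submodule.topologicalClosure_coe,
          Submodule.topologicalClosure_eq_top_iff.mpr horth, Submodule.top_coe]
      refine ⟨A, hdd, ?_, ?_, by rw [hgle]⟩
      · apply LinearPMap.le_of_le_graph
        rw [hAgr, hgdef]
        have h4 : A₀.graph = G.map e.toLinearMap := by
          rw [hGdef, graphL2, ← hedef, map_comap_linearEquiv]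
        rw [h4]
        exact Submodule.map_mono hGL
      · apply LinearPMap.eq_of_eq_graph
        have h5 : graphL2 A.adjoint = graphL2 A := by
          rw [graphL2_adjoint hdd, hgle, ← hLag]
        have h6 := congrArg (Submodule.map e.toLinearMap) h5
        rw [graphL2, graphL2, ← hedef] at h6
        rwa [map_comap_linearEquiv, map_comap_linearEquiv] at h6
  rw [hbridge]
  constructor
  · rintro ⟨hGL, hLag⟩
    have hGRo : G ≤ Rᗮ := le_trans hGL inf_le_right
    have hRGo : R ≤ Gᗮ := le_orth_symm hGRo
    have hRD : R ≤ D := le_inf hRGo hRM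
    set S := D ⊓ Rᗮ with hSdef
    haveI hfinS : FiniteDimensional ℝ S := Submodule.finiteDimensional_of_le inf_le_left
    have hSD : S ≤ D := inf_le_left
    have hLGS : M ⊓ Rᗮ = G ⊔ S := by
      rw [← hsupGD, sup_inf_assoc_of_le _ hGRo]
    set S' := S.map (symplJ H) with hS'def
    have hS'D : S' ≤ D := by
      rw [hS'def, ← hJD]; exact Submodule.map_mono hSD
    have hGS'o : G ≤ S'ᗮ := le_orth_symm (le_trans hS'D hDGo)
    have hLag2 : M ⊓ Rᗮ = G ⊔ (D ⊓ S'ᗮ) := by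
      conv_lhs => rw [hLag, hLGS]
      rw [Submodule.map_sup, hJG, ← hS'def, ← Submodule.inf_orthogonal,
        Submodule.orthogonal_orthogonal, ← hsupGD, sup_inf_assoc_of_le _ hGS'o]
    have hSS : S = D ⊓ S'ᗮ := by
      have h6 : G ⊔ S = G ⊔ (D ⊓ S'ᗮ) := by rw [← hLGS, hLag2]
      exact le_antisymm
        (sup_cancel_le (le_trans hSD hDGo) (le_trans inf_le_left hDGo) h6.le)
        (sup_cancel_le (le_trans inf_le_left hDGo) (le_trans hSD hDGo) h6.ge)
    -- dimension bookkeeping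
    have hfr1 : Module.finrank ℝ R + Module.finrank ℝ ↥(Rᗮ ⊓ D) = 2 * m := by
      rw [finrank_add_finrank_orth_inf hRD, hdefect]
    have hcomm1 : (Rᗮ ⊓ D : Submodule ℝ (WithLp 2 (H × H))) = S := by
      rw [hSdef, inf_comm]
    have hfrS' : Module.finrank ℝ S' = Module.finrank ℝ S :=
      ((Submodule.equivMapOfInjective _ hJinj S).finrank_eq).symm
    have hfr2 : Module.finrank ℝ S' + Module.finrank ℝ ↥(S'ᗮ ⊓ D) = 2 * m := by
      rw [finrank_add_finrank_orth_inf hS'D, hdefect]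
    have hcomm2 : (S'ᗮ ⊓ D : Submodule ℝ (WithLp 2 (H × H))) = D ⊓ S'ᗮ := inf_comm _ _
    have hfrSS : Module.finrank ℝ ↥(D ⊓ S'ᗮ) = Module.finrank ℝ S := by rw [← hSS]
    have hfrS : Module.finrank ℝ S = m := by
      rw [hcomm2, hfrSS] at hfr2
      omega
    have hfrR : Module.finrank ℝ R = m := by
      rw [hcomm1, hfrS] at hfr1
      omega
    -- condition 1
    have hcond1 : LinearMap.range (Θ : ↥M →ₗ[ℝ] EuclideanSpace ℝ (Fin m)) = ⊤ := by
      have hrn := LinearMap.finrank_range_add_finrank_ker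
        (Tad : EuclideanSpace ℝ (Fin m) →ₗ[ℝ] M)
      rw [finrank_euclideanSpace_fin] at hrn
      have he1 : LinearMap.range (Tad : EuclideanSpace ℝ (Fin m) →ₗ[ℝ] ↥M)
          = LinearMap.range (Tad : EuclideanSpace ℝ (Fin m) →ₗ[ℝ] ↥M) := rfl
      have he2 : LinearMap.ker (Tad : EuclideanSpace ℝ (Fin m) →ₗ[ℝ] ↥M)
          = LinearMap.ker (Tad : EuclideanSpace ℝ (Fin m) →ₗ[ℝ] ↥M) := rfl
      rw [he1, he2] at hrn
      have hrr : Module.finrank ℝ (LinearMap.range (Tad : EuclideanSpace ℝ (Fin m) →ₗ[ℝ] ↥M)) = m := by rw [← hfinrankR, hfrR]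
      have hker0' : Module.finrank ℝ (LinearMap.ker (Tad : EuclideanSpace ℝ (Fin m) →ₗ[ℝ] ↥M)) = 0 := by omega
      have hker0 : LinearMap.ker (Tad : EuclideanSpace ℝ (Fin m) →ₗ[ℝ] ↥M) = ⊥ := Submodule.finrank_eq_zero.mp hker0'
      rw [hkerTad] at hker0
      exact Submodule.orthogonal_eq_bot_iff.mp hker0
    refine ⟨hcond1, hcond2.mpr (by rw [hCD]; exact hRD), ?_⟩
    -- condition 3
    have hRDS : R = D ⊓ Sᗮ := by
      haveI : FiniteDimensional ℝ ↥(D ⊓ Sᗮ) := Submodule.finiteDimensional_of_le inf_le_left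
      refine Submodule.eq_of_le_of_finrank_eq (le_inf hRD (le_orth_symm inf_le_right)) ?_
      have hfr3 : Module.finrank ℝ S + Module.finrank ℝ ↥(Sᗮ ⊓ D) = 2 * m := by
        rw [finrank_add_finrank_orth_inf hSD, hdefect]
      have : (Sᗮ ⊓ D : Submodule ℝ (WithLp 2 (H × H))) = D ⊓ Sᗮ := inf_comm _ _
      rw [this] at hfr3
      rw [hfrR]
      omega
    have hJR : R.map (symplJ H) = S := by
      rw [hRDS, Submodule.map_inf _ hJinj, hJD, map_symplJ_orthogonal, ← hS'def, ← hSS]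
    have hSL : S ≤ M ⊓ Rᗮ := le_inf (le_trans hSD hDM) inf_le_right
    intro c h
    have h7 : symplJ H ((Tad c : M) : WithLp 2 (H × H)) ∈ R.map (symplJ H) :=
      ⟨_, ⟨Tad c, ⟨c, rfl⟩, rfl⟩, rfl⟩
    rw [hJR] at h7
    have hmem : symplJ H ((Tad c : M) : WithLp 2 (H × H)) ∈ (LinearMap.ker (Θ : ↥M →ₗ[ℝ] EuclideanSpace ℝ (Fin m))).map M.subtype := by
      rw [hLR]; exact hSL h7
    obtain ⟨y, hy, hcoe⟩ := hmem
    have h8 : (⟨symplJ H ((Tad c : M) : WithLp 2 (H × H)), h⟩ : M) = y := Subtype.ext hcoe.symm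
    rw [h8]
    exact hy
  · rintro ⟨h1, h2, h3⟩
    have hRD : R ≤ D := by rw [← hCD]; exact hcond2.mp h2
    have hGRo : G ≤ Rᗮ := le_orth_symm (le_trans hRD hDGo)
    have hGL : G ≤ M ⊓ Rᗮ := le_inf hGM hGRo
    have hJRM : R.map (symplJ H) ≤ D := by rw [← hJD]; exact Submodule.map_mono hRD
    have hJRRo : R.map (symplJ H) ≤ Rᗮ := by
      rintro x ⟨r, ⟨y, ⟨c, rfl⟩, rfl⟩, rfl⟩
      have hmem : symplJ H ((Tad c : M) : WithLp 2 (H × H)) ∈ M :=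
        hDM (hJRM ⟨_, ⟨Tad c, ⟨c, rfl⟩, rfl⟩, rfl⟩)
      have h8 := h3 c hmem
      have h9 : symplJ H ((Tad c : M) : WithLp 2 (H × H)) ∈ (LinearMap.ker (Θ : ↥M →ₗ[ℝ] EuclideanSpace ℝ (Fin m))).map M.subtype :=
        ⟨⟨_, hmem⟩, h8, rfl⟩
      rw [hLR] at h9
      exact h9.2
    have hker0 : LinearMap.ker (Tad : EuclideanSpace ℝ (Fin m) →ₗ[ℝ] ↥M) = ⊥ := by
      rw [hkerTad, h1, Submodule.top_orthogonal_eq_bot]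
    have hfrR : Module.finrank ℝ R = m := by
      have he1 : LinearMap.range (Tad : EuclideanSpace ℝ (Fin m) →ₗ[ℝ] ↥M)
          = LinearMap.range (Tad : EuclideanSpace ℝ (Fin m) →ₗ[ℝ] ↥M) := rfl
      have hinj : Function.Injective (Tad : EuclideanSpace ℝ (Fin m) →ₗ[ℝ] ↥M) :=
        (LinearMap.ker_eq_bot (f := (Tad : EuclideanSpace ℝ (Fin m) →ₗ[ℝ] ↥M))).mp hker0
      rw [hfinrankR, ← he1, LinearMap.finrank_range_of_inj hinj, finrank_euclideanSpace_fin]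
    set S := D ⊓ Rᗮ with hSdef
    haveI hfinS : FiniteDimensional ℝ S := Submodule.finiteDimensional_of_le inf_le_left
    have hfrS : Module.finrank ℝ S = m := by
      have hfr1 : Module.finrank ℝ R + Module.finrank ℝ ↥(Rᗮ ⊓ D) = 2 * m := by
        rw [finrank_add_finrank_orth_inf hRD, hdefect]
      have hcm : (Rᗮ ⊓ D : Submodule ℝ (WithLp 2 (H × H))) = S := by rw [hSdef, inf_comm]
      rw [hcm, hfrR] at hfr1
      omega
    have hJRS : R.map (symplJ H) = S := by
      refine Submodule.eq_of_le_of_finrank_eq (le_inf hJRM hJRRo) ?_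
      rw [hfrS, ← hfrR]
      exact ((Submodule.equivMapOfInjective _ hJinj R).finrank_eq).symm
    have hLGS : M ⊓ Rᗮ = G ⊔ S := by
      rw [← hsupGD, sup_inf_assoc_of_le _ hGRo]
    refine ⟨hGL, ?_⟩
    conv_rhs => rw [hLGS]
    rw [Submodule.map_sup, hJG, ← hJRS, map_symplJ_map_symplJ, ← Submodule.inf_orthogonal,
      Submodule.orthogonal_orthogonal, hLGS]
end

section
/- Let H be a 2m-dimensional real inner product space, Ω an invertible skew-self-adjoint linear operator on H (Ω* = −Ω), Θ : H → ℝ^m a linear map, and L = ker(Θ). Then L is coisotropic with respect to the symplectic form ω(u,v) = ⟨Ωu, v⟩, i.e. L^{⊥ω} = (Ω(L))^⊥ ⊆ L, if and only if Θ ∘ Ω^{-1} ∘ Θ* = 0, where Θ* : ℝ^m → H is the adjoint of Θ. -/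
lemma ker_eq_orthogonal_range_adjoint {H K : Type*} [NormedAddCommGroup H]
    [InnerProductSpace ℝ H] [FiniteDimensional ℝ H] [NormedAddCommGroup K]
    [InnerProductSpace ℝ K] [FiniteDimensional ℝ K] (Θ : H →ₗ[ℝ] K) :
    LinearMap.ker Θ = (LinearMap.range (LinearMap.adjoint Θ))ᗮ := by
  ext x
  simp only [LinearMap.mem_ker, Submodule.mem_orthogonal, LinearMap.mem_range,
    forall_exists_index]
  constructor
  · rintro hx u y rfl
    rw [LinearMap.adjoint_inner_left, hx, inner_zero_right]
  · intro h
    have := h (LinearMap.adjoint Θ (Θ x)) (Θ x) rfl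
    rw [LinearMap.adjoint_inner_left, real_inner_self_eq_norm_sq] at this
    have : ‖Θ x‖ = 0 := by nlinarith [norm_nonneg (Θ x)]
    simpa using this

/-- With `H` a `2m`-dimensional real inner product space, `Ω` invertible and
skew-self-adjoint (defining `ω(u,v) = ⟪Ωu, v⟫`), `Θ : H → ℝ^m` linear and `L = ker Θ`,
the subspace `L` is coisotropic (i.e. `L^{⊥ω} = (Ω(L))^⊥ ⊆ L`) iff `Θ ∘ Ω⁻¹ ∘ Θ* = 0`. -/
theorem statement6 {H : Type*} [NormedAddCommGroup H] [InnerProductSpace ℝ H]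
    [FiniteDimensional ℝ H] (m : ℕ) (hdim : Module.finrank ℝ H = 2 * m)
    (Ω : H →ₗ[ℝ] H) (hskew : LinearMap.adjoint Ω = -Ω)
    (Ωinv : H →ₗ[ℝ] H) (hinv₁ : Ωinv ∘ₗ Ω = LinearMap.id) (hinv₂ : Ω ∘ₗ Ωinv = LinearMap.id)
    (Θ : H →ₗ[ℝ] EuclideanSpace ℝ (Fin m)) :
    ((LinearMap.ker Θ).map Ω)ᗮ ≤ LinearMap.ker Θ ↔
      Θ ∘ₗ Ωinv ∘ₗ LinearMap.adjoint Θ = 0 := by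
  have hmap : (LinearMap.ker Θ).map Ω = LinearMap.ker (Θ ∘ₗ Ωinv) := by
    ext x
    simp only [Submodule.mem_map, LinearMap.mem_ker, LinearMap.comp_apply]
    constructor
    · rintro ⟨y, hy, rfl⟩
      have : Ωinv (Ω y) = y := congrFun (congrArg DFunLike.coe hinv₁) y
      rw [this, hy]
    · intro hx
      exact ⟨Ωinv x, hx, congrFun (congrArg DFunLike.coe hinv₂) x⟩
  rw [← LinearMap.comp_assoc, ← LinearMap.range_le_ker_iff, ← hmap,
    ker_eq_orthogonal_range_adjoint Θ]
  constructor
  · intro h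
    calc LinearMap.range (LinearMap.adjoint Θ)
        = (LinearMap.range (LinearMap.adjoint Θ))ᗮᗮ :=
          (Submodule.orthogonal_orthogonal _).symm
      _ ≤ (((LinearMap.range (LinearMap.adjoint Θ))ᗮ).map Ω)ᗮᗮ :=
          Submodule.orthogonal_le h
      _ = ((LinearMap.range (LinearMap.adjoint Θ))ᗮ).map Ω :=
          Submodule.orthogonal_orthogonal _
  · intro h
    calc (((LinearMap.range (LinearMap.adjoint Θ))ᗮ).map Ω)ᗮ
        ≤ (LinearMap.range (LinearMap.adjoint Θ))ᗮ := Submodule.orthogonal_le h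
end

section
/- Let H be a 2m-dimensional real inner product space, Ω an invertible skew-self-adjoint linear operator on H (Ω* = −Ω), and Θ : H → ℝ^m a linear map. Then the subspace L = ker(Θ) is Lagrangian with respect to the symplectic form ω(u,v) = ⟨Ωu, v⟩ (i.e. (Ω(L))^⊥ = L) if and only if Θ ∘ Ω^{-1} ∘ Θ* = 0 and Im(Θ) = ℝ^m, where Θ* : ℝ^m → H is the adjoint of Θ. -/
set_option linter.unnecessarySimpa false

/-- In a `2m`-dimensional real inner product space `H` with symplectic form
`ω(u,v) = ⟪Ωu, v⟫` given by an invertible skew-self-adjoint `Ω` (with two-sided inverse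
`Ωinv`), and `Θ : H → ℝ^m` linear, the subspace `L = ker Θ` is Lagrangian
(`(Ω(L))^⊥ = L`) iff `Θ ∘ Ω⁻¹ ∘ Θ* = 0` and `Im Θ = ℝ^m`. -/
theorem statement8 {H : Type*} [NormedAddCommGroup H] [InnerProductSpace ℝ H]
    [FiniteDimensional ℝ H] (m : ℕ) (hdim : Module.finrank ℝ H = 2 * m)
    (Ω : H →ₗ[ℝ] H) (hskew : LinearMap.adjoint Ω = -Ω)
    (Ωinv : H →ₗ[ℝ] H) (hinv₁ : Ωinv ∘ₗ Ω = LinearMap.id) (hinv₂ : Ω ∘ₗ Ωinv = LinearMap.id)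
    (Θ : H →ₗ[ℝ] EuclideanSpace ℝ (Fin m)) :
    ((LinearMap.ker Θ).map Ω)ᗮ = LinearMap.ker Θ ↔
      (Θ ∘ₗ Ωinv ∘ₗ LinearMap.adjoint Θ = 0 ∧ LinearMap.range Θ = ⊤) := by
  -- the linear equivalence given by Ωinv
  set e : H ≃ₗ[ℝ] H := LinearEquiv.ofLinear Ωinv Ω hinv₁ hinv₂ with he
  have heΩ : ∀ x, Ωinv (Ω x) = x := fun x => congrFun (congrArg DFunLike.coe hinv₁) x
  have hΩe : ∀ x, Ω (Ωinv x) = x := fun x => congrFun (congrArg DFunLike.coe hinv₂) x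
  set S : Submodule ℝ H := LinearMap.range (LinearMap.adjoint Θ) with hS
  -- (range Θ*)ᗮ = ker Θ
  have hSperp : Sᗮ = LinearMap.ker Θ := by
    ext x
    simp only [Submodule.mem_orthogonal, hS, LinearMap.mem_range, LinearMap.mem_ker]
    constructor
    · intro h
      have h2 : ∀ y, inner ℝ (Θ x) y = (0 : ℝ) := by
        intro y
        have := h (LinearMap.adjoint Θ y) ⟨y, rfl⟩
        rw [LinearMap.adjoint_inner_left] at this
        rwa [real_inner_comm]
      exact inner_self_eq_zero.mp (h2 (Θ x))
    · rintro h u ⟨y, rfl⟩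
      rw [LinearMap.adjoint_inner_left, h, inner_zero_right]
  have hkerperp : (LinearMap.ker Θ)ᗮ = S := by
    rw [← hSperp, Submodule.orthogonal_orthogonal]
  -- key: ((ker Θ).map Ω)ᗮ = S.map Ωinv
  have hkey : ((LinearMap.ker Θ).map Ω)ᗮ = S.map Ωinv := by
    ext x
    simp only [Submodule.mem_orthogonal]
    constructor
    · intro h
      refine ⟨Ω x, ?_, heΩ x⟩
      rw [← hkerperp]
      intro u hu
      have := h (Ω u) (Submodule.mem_map_of_mem hu)
      rw [real_inner_comm, ← LinearMap.adjoint_inner_left, hskew] at this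
      simp only [LinearMap.neg_apply, inner_neg_left, neg_eq_zero] at this
      rwa [real_inner_comm]
    · rintro ⟨y, hy, rfl⟩ u hu
      rcases Submodule.mem_map.mp hu with ⟨v, hv, rfl⟩
      have hv' : v ∈ Sᗮ := by rw [hSperp]; exact hv
      have h0 : inner ℝ y v = (0 : ℝ) := (Submodule.mem_orthogonal _ _).mp hv' y hy
      rw [real_inner_comm, ← LinearMap.adjoint_inner_left, hskew]
      simp only [LinearMap.neg_apply, inner_neg_left, neg_eq_zero]
      rw [hΩe]
      exact h0
  rw [hkey]
  -- dimension facts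
  have hdimS : Module.finrank ℝ S + Module.finrank ℝ (LinearMap.ker Θ) = 2 * m := by
    rw [← hSperp, ← hdim]; exact Submodule.finrank_add_finrank_orthogonal S
  have hmapdim : Module.finrank ℝ (S.map Ωinv) = Module.finrank ℝ S := by
    have : S.map Ωinv = S.map (e : H →ₗ[ℝ] H) := rfl
    rw [this, LinearEquiv.finrank_map_eq]
  have hrn : Module.finrank ℝ (LinearMap.range Θ) + Module.finrank ℝ (LinearMap.ker Θ) = 2 * m := by
    rw [← hdim]; exact LinearMap.finrank_range_add_finrank_ker Θ
  have hSrank : Module.finrank ℝ S = Module.finrank ℝ (LinearMap.range Θ) := by omega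
  constructor
  · intro h
    constructor
    · apply LinearMap.ext; intro y
      have : Ωinv (LinearMap.adjoint Θ y) ∈ S.map Ωinv :=
        Submodule.mem_map_of_mem ⟨y, rfl⟩
      rw [h, LinearMap.mem_ker] at this
      simpa using this
    · have hdk : Module.finrank ℝ (LinearMap.ker Θ) = Module.finrank ℝ S := by
        rw [← h, hmapdim]
      have hm : Module.finrank ℝ (LinearMap.range Θ) = m := by omega
      apply Submodule.eq_top_of_finrank_eq
      rw [hm, finrank_euclideanSpace_fin]
  · rintro ⟨h1, h2⟩
    have hle : S.map Ωinv ≤ LinearMap.ker Θ := by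
      rintro x ⟨y, ⟨z, rfl⟩, rfl⟩
      have := congrFun (congrArg DFunLike.coe h1) z
      simpa using this
    apply Submodule.eq_of_le_of_finrank_eq hle
    have hrt : Module.finrank ℝ (LinearMap.range Θ) = m := by
      rw [h2]; simpa using finrank_euclideanSpace_fin (𝕜 := ℝ) (n := m)
    omega
end

section
/- Let D ⊆ ℝ^{2m} be open and Ω : D → L(ℝ^{2m}) a continuously differentiable map such that for every x ∈ D the operator Ω(x) is skew-self-adjoint (Ω(x)* = −Ω(x)) and invertible, and suppose the 2-form ω(x)(u,v) = ⟨Ω(x)u, v⟩ is closed, i.e. for all x ∈ D and all u, v, w ∈ ℝ^{2m}: ⟨(Ω'(x)u)v, w⟩ + ⟨(Ω'(x)v)w, u⟩ + ⟨(Ω'(x)w)u, v⟩ = 0, where Ω'(x)h denotes the derivative of Ω at x in direction h. Let x : [a,b] → D be a C¹ curve and let ξ₁, ξ₂ : [a,b] → ℝ^{2m} be differentiable functions satisfying the parallel-transport equation: for k = 1,2, for all t ∈ [a,b] and all v ∈ ℝ^{2m}, ⟨Ω(x(t)) ξₖ'(t), v⟩ = −⟨(Ω'(x(t))v) ξₖ(t),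 x'(t)⟩. Then the function t ↦ ⟨Ω(x(t)) ξ₁(t), ξ₂(t)⟩ is constant on [a,b]. -/
open scoped RealInnerProductSpace

/-- Proposition A.5: Let `D ⊆ ℝ^{2m}` be open and `Ω : D → L(ℝ^{2m})` a C¹ family
of invertible skew-self-adjoint operators such that the 2-form `ω(x)(u,v) = ⟪Ω(x)u, v⟫` is
closed.  If `x : [a,b] → D` is a C¹ curve and `ξ₁, ξ₂` solve the parallel-transport equation
`⟪Ω(x(t)) ξₖ'(t), v⟫ = -⟪(Ω'(x(t))v) ξₖ(t), x'(t)⟫` along it, then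
`t ↦ ⟪Ω(x(t)) ξ₁(t), ξ₂(t)⟫` is constant on `[a,b]`. -/
theorem statement9 (m : ℕ)
    (D : Set (EuclideanSpace ℝ (Fin (2 * m)))) (hD : IsOpen D)
    (Ω : EuclideanSpace ℝ (Fin (2 * m)) →
      (EuclideanSpace ℝ (Fin (2 * m)) →L[ℝ] EuclideanSpace ℝ (Fin (2 * m))))
    (Ω' : EuclideanSpace ℝ (Fin (2 * m)) →
      (EuclideanSpace ℝ (Fin (2 * m)) →L[ℝ]
        (EuclideanSpace ℝ (Fin (2 * m)) →L[ℝ] EuclideanSpace ℝ (Fin (2 * m)))))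
    (hΩC1 : ContDiffOn ℝ 1 Ω D)
    (hΩ' : ∀ x ∈ D, HasFDerivAt Ω (Ω' x) x)
    (hskew : ∀ x ∈ D, ContinuousLinearMap.adjoint (Ω x) = -(Ω x))
    (hinv : ∀ x ∈ D, Function.Bijective (Ω x))
    (hclosed : ∀ x ∈ D, ∀ u v w : EuclideanSpace ℝ (Fin (2 * m)),
      ⟪Ω' x u v, w⟫ + ⟪Ω' x v w, u⟫ + ⟪Ω' x w u, v⟫ = 0)
    (a b : ℝ) (hab : a ≤ b)
    (x x' : ℝ → EuclideanSpace ℝ (Fin (2 * m)))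
    (hxC1 : ContDiffOn ℝ 1 x (Set.Icc a b))
    (hx : ∀ t ∈ Set.Icc a b, HasDerivWithinAt x (x' t) (Set.Icc a b) t)
    (hxD : ∀ t ∈ Set.Icc a b, x t ∈ D)
    (ξ₁ ξ₂ dξ₁ dξ₂ : ℝ → EuclideanSpace ℝ (Fin (2 * m)))
    (hξ₁ : ∀ t ∈ Set.Icc a b, HasDerivWithinAt ξ₁ (dξ₁ t) (Set.Icc a b) t)
    (hξ₂ : ∀ t ∈ Set.Icc a b, HasDerivWithinAt ξ₂ (dξ₂ t) (Set.Icc a b) t)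
    (heq₁ : ∀ t ∈ Set.Icc a b, ∀ v : EuclideanSpace ℝ (Fin (2 * m)),
      ⟪Ω (x t) (dξ₁ t), v⟫ = -⟪Ω' (x t) v (ξ₁ t), x' t⟫)
    (heq₂ : ∀ t ∈ Set.Icc a b, ∀ v : EuclideanSpace ℝ (Fin (2 * m)),
      ⟪Ω (x t) (dξ₂ t), v⟫ = -⟪Ω' (x t) v (ξ₂ t), x' t⟫) :
    ∀ t ∈ Set.Icc a b, ⟪Ω (x t) (ξ₁ t), ξ₂ t⟫ = ⟪Ω (x a) (ξ₁ a), ξ₂ a⟫ := by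
  have hskew_inner : ∀ p ∈ D, ∀ z w : EuclideanSpace ℝ (Fin (2 * m)),
      ⟪Ω p z, w⟫ = -⟪Ω p w, z⟫ := by
    intro p hp z w
    have h1 : ⟪(ContinuousLinearMap.adjoint (Ω p)) w, z⟫ = ⟪w, Ω p z⟫ :=
      ContinuousLinearMap.adjoint_inner_left (Ω p) z w
    rw [hskew p hp] at h1
    simp only [ContinuousLinearMap.neg_apply, inner_neg_left] at h1
    linarith [h1, real_inner_comm z (Ω p w), real_inner_comm w (Ω p z)]
  -- skewness of the derivative Ω'
  have hskew' : ∀ p ∈ D, ∀ h u v : EuclideanSpace ℝ (Fin (2 * m)),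
      ⟪Ω' p h u, v⟫ + ⟪Ω' p h v, u⟫ = 0 := by
    intro p hp h u v
    set T : (EuclideanSpace ℝ (Fin (2 * m)) →L[ℝ] EuclideanSpace ℝ (Fin (2 * m))) →L[ℝ] ℝ :=
      ((innerSL ℝ v).comp (ContinuousLinearMap.apply ℝ (EuclideanSpace ℝ (Fin (2 * m))) u)) +
        ((innerSL ℝ u).comp (ContinuousLinearMap.apply ℝ (EuclideanSpace ℝ (Fin (2 * m))) v))
      with hT
    have hTval : ∀ M : EuclideanSpace ℝ (Fin (2 * m)) →L[ℝ] EuclideanSpace ℝ (Fin (2 * m)),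
        T M = ⟪v, M u⟫ + ⟪u, M v⟫ := by
      intro M; simp [hT]
    have hg : HasFDerivAt (fun q => T (Ω q)) (T.comp (Ω' p)) p :=
      T.hasFDerivAt.comp p (hΩ' p hp)
    have hev : (fun q => T (Ω q)) =ᶠ[nhds p] fun _ => (0 : ℝ) := by
      filter_upwards [hD.eventually_mem hp] with q hq
      have h2 := hskew_inner q hq u v
      rw [hTval]
      linarith [h2, real_inner_comm v (Ω q u), real_inner_comm u (Ω q v),
        real_inner_comm ((Ω q) u) v, real_inner_comm ((Ω q) v) u]
    have hzero : HasFDerivAt (fun q => T (Ω q)) 0 p :=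
      (hasFDerivAt_const (𝕜 := ℝ) (0 : ℝ) p).congr_of_eventuallyEq hev
    have hTeq : T.comp (Ω' p) = 0 := hg.unique hzero
    have h3 : T ((Ω' p) h) = 0 := by
      have := congrFun (congrArg DFunLike.coe hTeq) h
      simpa using this
    rw [hTval] at h3
    linarith [h3, real_inner_comm v ((Ω' p h) u), real_inner_comm u ((Ω' p h) v)]
  -- the scalar function and its zero derivative
  have hderiv : ∀ t ∈ Set.Icc a b,
      HasDerivWithinAt (fun s => ⟪Ω (x s) (ξ₁ s), ξ₂ s⟫) 0 (Set.Icc a b) t := by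
    intro t ht
    have hg : HasDerivWithinAt (fun s => Ω (x s) (ξ₁ s))
        (Ω' (x t) (x' t) (ξ₁ t) + Ω (x t) (dξ₁ t)) (Set.Icc a b) t :=
      ((hΩ' (x t) (hxD t ht)).comp_hasDerivWithinAt t (hx t ht)).clm_apply (hξ₁ t ht)
    have hinner := hg.inner ℝ (hξ₂ t ht)
    have hval : ⟪Ω (x t) (ξ₁ t), dξ₂ t⟫ +
        ⟪Ω' (x t) (x' t) (ξ₁ t) + Ω (x t) (dξ₁ t), ξ₂ t⟫ = 0 := by
      have hp := hxD t ht
      have E1 := heq₁ t ht (ξ₂ t)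
      have E2 := heq₂ t ht (ξ₁ t)
      have Sk := hskew_inner (x t) hp (ξ₁ t) (dξ₂ t)
      have C := hclosed (x t) hp (x' t) (ξ₁ t) (ξ₂ t)
      have S := hskew' (x t) hp (ξ₂ t) (x' t) (ξ₁ t)
      rw [inner_add_left]
      linarith [E1, E2, Sk, C, S]
    rw [hval] at hinner
    exact hinner
  -- conclude constancy
  have hcont : ContinuousOn (fun s => ⟪Ω (x s) (ξ₁ s), ξ₂ s⟫) (Set.Icc a b) := fun t ht =>
    (hderiv t ht).continuousWithinAt
  have hright : ∀ t ∈ Set.Ico a b,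
      HasDerivWithinAt (fun s => ⟪Ω (x s) (ξ₁ s), ξ₂ s⟫) 0 (Set.Ici t) t := by
    intro t ht
    exact (hderiv t (Set.Ico_subset_Icc_self ht)).mono_of_mem_nhdsWithin
      (Icc_mem_nhdsGE_of_mem ht)
  exact constant_of_has_deriv_right_zero hcont hright
end

section
/- Let H be a real Hilbert space with closed subspaces L and L' such that H = L ⊕ L' (topological direct sum); let P be the bounded projection onto L along L' and Q = I − P. Let r ≥ 1 and let U : L → L(L', H) be a C^r map such that for every x ∈ L the operator W(x) := P + U(x) ∘ Q (which acts as the identity on L and as U(x) on L') is a bounded linear automorphism of H. Define V : H → H by V(x) = Px + U(Px)(Qx). Then: (1) V is of class C^r; (2) V(x) = x for every x ∈ L; (3) for every x ∈ L the Fréchet derivative satisfies V'(x) = W(x); and (4) V is a local C^r-diffeomorphism at every point of L, i.e. for each x ∈ L there are open neighborhoods of x and of V(x) between which V restricts to a C^r-diffeomorphism. -/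
/-- construction in Proposition A.8: Let `H = L ⊕ L'` be a topological direct
sum of closed subspaces of a real Hilbert space, `P` the bounded projection onto `L` along
`L'` (with corestrictions `Pr : H → L`, `Qr : H → L'`, `Q = I - P`), and `U : L → L(L', H)` a
`C^r` map (`r ≥ 1`) such that each `W(x) = P + U(x) ∘ Q` is a bounded linear automorphism of
`H`.  Then `V(x) = Px + U(Px)(Qx)` is `C^r`, fixes `L` pointwise, has Fréchet derivative
`V'(x) = W(x)` at every `x ∈ L`, and is a local `C^r`-diffeomorphism at every point of `L`. -/
theorem statement11 {H : Type*} [NormedAddCommGroup H] [InnerProductSpace ℝ H] [CompleteSpace H]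
    (L L' : Submodule ℝ H) (hLc : IsClosed (L : Set H)) (hL'c : IsClosed (L' : Set H))
    (hcompl : IsCompl L L')
    (P : H →L[ℝ] H) (hPL : ∀ x ∈ L, P x = x) (hPL' : ∀ x ∈ L', P x = 0)
    (Pr : H →L[ℝ] L) (hPr : ∀ x : H, (Pr x : H) = P x)
    (Qr : H →L[ℝ] L') (hQr : ∀ x : H, (Qr x : H) = x - P x)
    (r : ℕ) (hr : 1 ≤ r)
    (U : L → (L' →L[ℝ] H)) (hU : ContDiff ℝ r U)
    (W : L → (H →L[ℝ] H)) (hW : ∀ l : L, W l = P + (U l).comp Qr)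
    (hWaut : ∀ l : L, ∃ Winv : H →L[ℝ] H,
      (W l).comp Winv = ContinuousLinearMap.id ℝ H ∧
      Winv.comp (W l) = ContinuousLinearMap.id ℝ H)
    (V : H → H) (hV : ∀ x : H, V x = P x + U (Pr x) (Qr x)) :
    ContDiff ℝ r V ∧
    (∀ x ∈ L, V x = x) ∧
    (∀ x : L, HasFDerivAt V (W x) (x : H)) ∧
    (∀ x ∈ L, ∃ s t : Set H, IsOpen s ∧ IsOpen t ∧ x ∈ s ∧ V x ∈ t ∧
      Set.BijOn V s t ∧ ContDiffOn ℝ r V s ∧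
      ∃ g : H → H, ContDiffOn ℝ r g t ∧
        (∀ y ∈ s, g (V y) = y) ∧ (∀ z ∈ t, V (g z) = z)) := by
  have hVeq : V = fun x : H => P x + U (Pr x) (Qr x) := funext hV
  -- (1) smoothness
  have hVcd : ContDiff ℝ r V := by
    rw [hVeq]
    exact P.contDiff.add (((hU.comp Pr.contDiff)).clm_apply Qr.contDiff)
  -- auxiliary facts for points of L
  have hQr0 : ∀ x ∈ L, Qr x = 0 := by
    intro x hx
    apply Subtype.ext
    rw [hQr, hPL x hx, sub_self]; rfl
  have hPrL : ∀ x : L, Pr (x : H) = x := by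
    intro x
    apply Subtype.ext
    rw [hPr, hPL x x.2]
  -- (2) fixes L pointwise
  have hfix : ∀ x ∈ L, V x = x := by
    intro x hx
    rw [hV, hQr0 x hx, map_zero, add_zero, hPL x hx]
  -- (3) derivative along L
  have hderiv : ∀ x : L, HasFDerivAt V (W x) (x : H) := by
    intro x
    have hUd : Differentiable ℝ U := hU.differentiable (by exact_mod_cast (Nat.one_le_iff_ne_zero.mp hr))
    have hc : HasFDerivAt (fun y : H => U (Pr y))
        ((fderiv ℝ U (Pr (x : H))).comp Pr) (x : H) :=
      HasFDerivAt.comp (𝕜 := ℝ) (g := U) (f := Pr) (x : H) ((hUd (Pr (x : H))).hasFDerivAt) Pr.hasFDerivAt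
    have h2 : HasFDerivAt (fun y : H => U (Pr y) (Qr y))
        ((U (Pr (x : H))).comp Qr +
          ((fderiv ℝ U (Pr (x : H))).comp Pr).flip (Qr (x : H))) (x : H) :=
      hc.clm_apply Qr.hasFDerivAt
    have hflip : ((fderiv ℝ U (Pr (x : H))).comp Pr).flip (Qr (x : H)) = 0 := by
      rw [hQr0 x x.2]
      ext v
      simp
    rw [hflip, add_zero, hPrL] at h2
    have := P.hasFDerivAt.add h2
    replace this : HasFDerivAt V (P + (U x).comp Qr) (x : H) := by rw [hVeq]; exact this
    rwa [hW]
  refine ⟨hVcd, hfix, hderiv, ?_⟩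
  -- (4) local diffeomorphism at points of L
  intro x hx
  obtain ⟨Winv, hWr, hWl⟩ := hWaut ⟨x, hx⟩
  let e : H ≃L[ℝ] H := ContinuousLinearEquiv.equivOfInverse (W ⟨x, hx⟩) Winv
    (fun y => congrFun (congrArg DFunLike.coe hWl) y)
    (fun y => congrFun (congrArg DFunLike.coe hWr) y)
  have hca : ContDiffAt ℝ r V x := hVcd.contDiffAt
  have hf' : HasFDerivAt V (e : H →L[ℝ] H) x := hderiv ⟨x, hx⟩
  have hn : (r : WithTop ℕ∞) ≠ 0 := by exact_mod_cast (Nat.one_le_iff_ne_zero.mp hr)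
  set PH := hca.toOpenPartialHomeomorph V hf' hn with hPH
  have hPHcoe : (PH : H → H) = V := rfl
  have hxs : x ∈ PH.source := hca.mem_toOpenPartialHomeomorph_source hf' hn
  have hinv : ContDiffAt ℝ r PH.symm (V x) := by
    apply PH.contDiffAt_symm (hca.image_mem_toOpenPartialHomeomorph_target hf' hn)
    · convert hf'
      exact PH.left_inv hxs
    · convert hca
      exact PH.left_inv hxs
  obtain ⟨u, hu, hgcd⟩ := hinv.contDiffOn le_rfl (by simp)
  obtain ⟨u', hu'u, hu'o, hxu'⟩ := mem_nhds_iff.mp hu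
  refine ⟨PH.source ∩ V ⁻¹' (PH.target ∩ u'), PH.target ∩ u',
    ?_, PH.open_target.inter hu'o, ⟨hxs, ?_⟩,
    ⟨hca.image_mem_toOpenPartialHomeomorph_target hf' hn, hxu'⟩, ?_, hVcd.contDiffOn,
    PH.symm, hgcd.mono (fun z hz => hu'u hz.2), ?_, ?_⟩
  · exact PH.open_source.inter ((hVcd.continuous.isOpen_preimage _)
      (PH.open_target.inter hu'o))
  · exact ⟨hca.image_mem_toOpenPartialHomeomorph_target hf' hn, hxu'⟩
  · constructor
    · intro y hy; exact hy.2
    constructor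
    · intro a ha b hb hab
      exact PH.injOn ha.1 hb.1 hab
    · intro z hz
      refine ⟨PH.symm z, ⟨PH.map_target hz.1, ?_⟩, PH.right_inv hz.1⟩
      rw [Set.mem_preimage, ← hPHcoe, PH.right_inv hz.1]
      exact hz
  · intro y hy
    exact PH.left_inv hy.1
  · intro z hz
    exact PH.right_inv hz.1
end
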